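/- arXiv:1408.5599 — 4 statements merged into one kernel-verified Lean document; each statement's English description precedes it below -/
import Mathlib

section
/- With the same setup of random rotated iterations of a degree-one circle map f, the RDS φ^f is two-point contractible on the circle if and only if f has no subperiods, where α ∈ (0,1) is a subperiod of f if F(x+α) − F(x) = α for all x. -/
open MeasureTheory Filter Topology

/-- The random trajectory: `compIter F n a x` is the lift of
`f_{a (n-1)} ∘ ⋯ ∘ f_{a 0}` applied to `x`, where `f_α([x]) = [F(x+α) - α]`. -/
noncomputable def compIter (F : ℝ → ℝ) : ℕ → (ℕ → ℝ) → ℝ → ℝ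
  | 0, _, x => x
  | n + 1, a, x => F (compIter F n a x + a n) - a n

/-- The law of `n` i.i.d. uniform random variables on `[0,1)`. -/
noncomputable def unifIid (n : ℕ) : Measure (Fin n → ℝ) :=
  Measure.pi fun _ : Fin n => volume.restrict (Set.Ico (0 : ℝ) 1)

/-- Extend `a : Fin n → ℝ` to `ℕ → ℝ` by zero. -/
noncomputable def extSeq {n : ℕ} (a : Fin n → ℝ) : ℕ → ℝ :=
  fun i => if h : i < n then a ⟨i, h⟩ else 0

namespace Stmt16Aux

lemma normAC (t : ℝ) : ‖((t : ℝ) : AddCircle (1 : ℝ))‖ = |t - round t| := by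
  rw [AddCircle.norm_eq]; norm_num

lemma normAC_min (t : ℝ) :
    ‖((t : ℝ) : AddCircle (1 : ℝ))‖ = min (Int.fract t) (1 - Int.fract t) := by
  rw [normAC, abs_sub_round_eq_min]

lemma distAC (u v : ℝ) :
    dist ((u : ℝ) : AddCircle (1 : ℝ)) ((v : ℝ) : AddCircle (1 : ℝ))
      = ‖((u - v : ℝ) : AddCircle (1 : ℝ))‖ := by
  rw [dist_eq_norm, AddCircle.coe_sub]

lemma normAC_neg (t : ℝ) :
    ‖((-t : ℝ) : AddCircle (1 : ℝ))‖ = ‖((t : ℝ) : AddCircle (1 : ℝ))‖ := by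
  rw [AddCircle.coe_neg, norm_neg]

lemma lift_int (F : ℝ → ℝ) (hdeg : ∀ x : ℝ, F (x + 1) = F x + 1) :
    ∀ (k : ℤ) (t : ℝ), F (t + k) = F t + k := by
  have hmono : ∀ t : ℝ, F (t - 1) = F t - 1 := fun t => by
    have := hdeg (t - 1); rw [sub_add_cancel] at this; linarith
  intro k
  induction k using Int.induction_on with
  | zero => simp
  | succ n ih =>
      intro t
      push_cast
      push_cast at ih
      rw [show t + ((n : ℝ) + 1) = (t + n) + 1 by ring, hdeg, ih]
      ring
  | pred n ih =>
      intro t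
      push_cast
      push_cast at ih
      rw [show t + (-(n : ℝ) - 1) = (t + -(n : ℝ)) - 1 by ring, hmono, ih]
      ring

lemma compIter_shift (F : ℝ → ℝ) {α : ℝ} (hsub : ∀ t, F (t + α) = F t + α)
    (n : ℕ) (a : ℕ → ℝ) (u : ℝ) : compIter F n a (u + α) = compIter F n a u + α := by
  induction n with
  | zero => rfl
  | succ k ih =>
      simp only [compIter, ih]
      rw [show compIter F k a u + α + a k = (compIter F k a u + a k) + α by ring, hsub]
      ring

lemma int_shift (F : ℝ → ℝ) (hFc : Continuous F) (hdeg : ∀ x : ℝ, F (x + 1) = F x + 1)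
    (s t : ℝ) : (∫ u in t..(t + 1), F u) - ∫ u in s..(s + 1), F u = t - s := by
  have hInt : ∀ a b : ℝ, IntervalIntegrable F volume a b := fun a b =>
    hFc.intervalIntegrable a b
  have h1 : (∫ u in s..(s + 1), F u) + (∫ u in (s + 1)..(t + 1), F u)
      = ∫ u in s..(t + 1), F u :=
    intervalIntegral.integral_add_adjacent_intervals (hInt _ _) (hInt _ _)
  have h2 : (∫ u in s..t, F u) + (∫ u in t..(t + 1), F u) = ∫ u in s..(t + 1), F u :=
    intervalIntegral.integral_add_adjacent_intervals (hInt _ _) (hInt _ _)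
  have h3 : (∫ u in (s + 1)..(t + 1), F u) = ∫ u in s..t, F (u + 1) :=
    (intervalIntegral.integral_comp_add_right (fun u => F u) 1).symm
  have h4 : (∫ u in s..t, F (u + 1)) = (∫ u in s..t, F u) + (t - s) := by
    simp only [hdeg]
    rw [intervalIntegral.integral_add (hInt _ _) intervalIntegrable_const]
    simp
  linarith

/-- The key analytic lemma: if the (lifted) circle distance between the images of `x` and `y`
under `f_α` is never less than the circle distance between `x` and `y`, then `f` has
a subperiod. -/
lemma key (F : ℝ → ℝ) (hFc : Continuous F) (hdeg : ∀ x : ℝ, F (x + 1) = F x + 1)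
    (x y : ℝ) (hd : 0 < ‖((y - x : ℝ) : AddCircle (1 : ℝ))‖)
    (h : ∀ α : ℝ, ‖((y - x : ℝ) : AddCircle (1 : ℝ))‖
      ≤ ‖((F (y + α) - F (x + α) : ℝ) : AddCircle (1 : ℝ))‖) :
    ∃ α ∈ Set.Ioo (0 : ℝ) 1, ∀ t : ℝ, F (t + α) - F t = α := by
  set G : ℝ → ℝ := fun α => F (y + α) - F (x + α) with hGdef
  set c : ℝ := y - x with hc
  set d : ℝ := ‖((c : ℝ) : AddCircle (1 : ℝ))‖ with hdd
  clear_value G c d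
  have hG : Continuous G := by
    rw [hGdef]
    exact (hFc.comp (by fun_prop)).sub (hFc.comp (by fun_prop))
  have hd2 : d ≤ 1 / 2 := by rw [hdd, normAC]; exact abs_sub_round c
  have hfb : ∀ α, d ≤ Int.fract (G α) ∧ d ≤ 1 - Int.fract (G α) := by
    intro α
    have hh := h α
    rw [normAC_min] at hh
    rw [hGdef]
    exact ⟨le_trans hh (min_le_left _ _), le_trans hh (min_le_right _ _)⟩
  have hlow : ∀ α, (⌊G α⌋ : ℝ) + d ≤ G α := fun α => by
    have h1 := (hfb α).1
    rw [← Int.self_sub_floor] at h1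
    linarith
  have hupp : ∀ α, G α ≤ (⌊G α⌋ : ℝ) + 1 - d := fun α => by
    have h1 := (hfb α).2
    rw [← Int.self_sub_floor] at h1
    linarith
  set m : ℤ := ⌊G 0⌋ with hm
  clear_value m
  have hfloor : ∀ α : ℝ, ⌊G α⌋ = m := by
    intro α
    by_contra hne
    rcases lt_or_gt_of_ne hne with hlt | hgt
    · -- ⌊G α⌋ ≤ m - 1
      have hle : (⌊G α⌋ : ℝ) + 1 ≤ (m : ℝ) := by exact_mod_cast Int.lt_iff_add_one_le.mp hlt
      have h1 : G α ≤ (m : ℝ) - d := by have := hupp α; linarith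
      have h2 : (m : ℝ) + d ≤ G 0 := by rw [hm]; exact hlow 0
      have hv : (m : ℝ) + d / 2 ∈ Set.uIcc (G 0) (G α) := by
        rw [Set.mem_uIcc]; right; constructor <;> linarith
      obtain ⟨β, -, hβ⟩ := intermediate_value_uIcc hG.continuousOn hv
      have hfr : Int.fract (G β) = d / 2 := by
        rw [hβ, Int.fract_intCast_add, Int.fract_eq_self.mpr ⟨by linarith, by linarith⟩]
      have := (hfb β).1
      rw [hfr] at this
      linarith
    · -- ⌊G α⌋ ≥ m + 1
      have hle : (m : ℝ) + 1 ≤ (⌊G α⌋ : ℝ) := by exact_mod_cast Int.lt_iff_add_one_le.mp hgt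
      have h1 : (m : ℝ) + 1 + d ≤ G α := by have := hlow α; linarith
      have h2 : G 0 ≤ (m : ℝ) + 1 - d := by rw [hm]; exact hupp 0
      have hv : (m : ℝ) + (1 - d / 2) ∈ Set.uIcc (G 0) (G α) := by
        rw [Set.mem_uIcc]; left; constructor <;> linarith
      obtain ⟨β, -, hβ⟩ := intermediate_value_uIcc hG.continuousOn hv
      have hfr : Int.fract (G β) = 1 - d / 2 := by
        rw [hβ, Int.fract_intCast_add, Int.fract_eq_self.mpr ⟨by linarith, by linarith⟩]
      have := (hfb β).2
      rw [hfr] at this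
      linarith
  have hband : ∀ α, (m : ℝ) + d ≤ G α ∧ G α ≤ (m : ℝ) + 1 - d := by
    intro α
    have h1 := hlow α
    have h2 := hupp α
    rw [hfloor α] at h1 h2
    exact ⟨h1, h2⟩
  -- the mean of G over any unit interval is c
  have hGint : ∀ a : ℝ, (∫ u in a..(a + 1), G u) = c := by
    intro a
    have hIy : IntervalIntegrable (fun u => F (y + u)) volume a (a + 1) :=
      (hFc.comp (continuous_const.add continuous_id)).intervalIntegrable _ _
    have hIx : IntervalIntegrable (fun u => F (x + u)) volume a (a + 1) :=
      (hFc.comp (continuous_const.add continuous_id)).intervalIntegrable _ _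
    have e : (∫ u in a..(a + 1), G u)
        = (∫ u in a..(a + 1), F (y + u)) - ∫ u in a..(a + 1), F (x + u) := by
      rw [hGdef]
      exact intervalIntegral.integral_sub hIy hIx
    rw [e, intervalIntegral.integral_comp_add_left F y,
      intervalIntegral.integral_comp_add_left F x,
      show y + (a + 1) = (y + a) + 1 by ring, show x + (a + 1) = (x + a) + 1 by ring,
      int_shift F hFc hdeg (x + a) (y + a)]
    rw [hc]; ring
  have h01 : (∫ u in (0 : ℝ)..1, G u) = c := by
    have := hGint 0; rwa [zero_add] at this
  have hmc : (m : ℝ) + d ≤ c ∧ c ≤ (m : ℝ) + 1 - d := by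
    constructor
    · calc (m : ℝ) + d = ∫ _u in (0 : ℝ)..1, ((m : ℝ) + d) := by simp
        _ ≤ ∫ u in (0 : ℝ)..1, G u :=
          intervalIntegral.integral_mono_on (by norm_num) intervalIntegrable_const
            (hG.intervalIntegrable _ _) (fun u _ => (hband u).1)
        _ = c := h01
    · calc c = ∫ u in (0 : ℝ)..1, G u := h01.symm
        _ ≤ ∫ _u in (0 : ℝ)..1, ((m : ℝ) + 1 - d) :=
          intervalIntegral.integral_mono_on (by norm_num) (hG.intervalIntegrable _ _)
            intervalIntegrable_const (fun u _ => (hband u).2)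
        _ = (m : ℝ) + 1 - d := by simp
  have hfc : ⌊c⌋ = m := by
    rw [Int.floor_eq_iff]
    constructor
    · linarith [hmc.1]
    · linarith [hmc.2]
  have hdm : d = min (c - (m : ℝ)) (1 - (c - (m : ℝ))) := by
    rw [hdd, normAC_min, ← Int.self_sub_floor, hfc]
  -- G is constant equal to c
  have hGconst : ∀ α : ℝ, G α = c := by
    rcases min_cases (c - (m : ℝ)) (1 - (c - (m : ℝ))) with ⟨hmin, _⟩ | ⟨hmin, _⟩
    · -- d = c - m, so G ≥ c everywhere
      have hdc : d = c - (m : ℝ) := by rw [hdm, hmin]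
      have hge : ∀ α, c ≤ G α := fun α => by have := (hband α).1; linarith
      intro α
      refine le_antisymm ?_ (hge α)
      by_contra hgtα
      push_neg at hgtα
      have hltI := intervalIntegral.integral_lt_integral_of_continuousOn_of_le_of_exists_lt
        (show α - 1/2 < α + 1/2 by linarith) continuousOn_const hG.continuousOn
        (fun u _ => hge u) ⟨α, ⟨by linarith, by linarith⟩, hgtα⟩
      rw [intervalIntegral.integral_const] at hltI
      have : (∫ u in (α - 1/2)..(α + 1/2), G u) = c := by
        have := hGint (α - 1/2)
        rwa [show (α - 1/2) + 1 = α + 1/2 by ring] at this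
      rw [this] at hltI
      simp only [smul_eq_mul] at hltI
      nlinarith [hltI]
    · -- d = 1 - (c - m), so G ≤ c everywhere
      have hdc : d = 1 - (c - (m : ℝ)) := by rw [hdm, hmin]
      have hle : ∀ α, G α ≤ c := fun α => by have := (hband α).2; linarith
      intro α
      refine le_antisymm (hle α) ?_
      by_contra hgtα
      push_neg at hgtα
      have hltI := intervalIntegral.integral_lt_integral_of_continuousOn_of_le_of_exists_lt
        (show α - 1/2 < α + 1/2 by linarith) hG.continuousOn continuousOn_const
        (fun u _ => hle u) ⟨α, ⟨by linarith, by linarith⟩, hgtα⟩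
      rw [intervalIntegral.integral_const] at hltI
      have : (∫ u in (α - 1/2)..(α + 1/2), G u) = c := by
        have := hGint (α - 1/2)
        rwa [show (α - 1/2) + 1 = α + 1/2 by ring] at this
      rw [this] at hltI
      simp only [smul_eq_mul] at hltI
      nlinarith [hltI]
  -- the subperiod is c - m
  have hd0 : 0 < d := hd
  refine ⟨c - (m : ℝ), ⟨by nlinarith [hmc.1, hd0], by nlinarith [hmc.2, hd0]⟩, ?_⟩
  have hcc : ∀ t : ℝ, F (t + c) = F t + c := by
    intro t
    have hα := hGconst (t - x)
    simp only [hGdef] at hα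
    rw [show y + (t - x) = t + c by rw [hc]; ring, show x + (t - x) = t by ring] at hα
    linarith
  intro t
  have h2 := lift_int F hdeg (-m) (t + c)
  rw [show t + (c - (m : ℝ)) = (t + c) + ((-m : ℤ) : ℝ) by push_cast; ring, h2, hcc t]
  push_cast
  ring

end Stmt16Aux

open Stmt16Aux in
/-- The RDS `φ^f` of randomly rotated iterations of a degree-one smooth circle map `f`
(with lift `F`) is two-point contractible on the circle — any two distinct points have
positive probability of being moved closer together — if and only if `f` has no
subperiods, i.e. no `α ∈ (0,1)` with `F(x+α) − F(x) = α` for all `x`. -/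
theorem stmt16 (F : ℝ → ℝ) (hF : ContDiff ℝ (⊤ : ℕ∞) F)
    (hdeg : ∀ x : ℝ, F (x + 1) = F x + 1) :
    (∀ x y : ℝ, (↑x : AddCircle (1 : ℝ)) ≠ ↑y →
      ∃ n : ℕ, 0 < unifIid n
        {a | dist (↑(compIter F n (extSeq a) x) : AddCircle (1 : ℝ))
              (↑(compIter F n (extSeq a) y))
            < dist (↑x : AddCircle (1 : ℝ)) (↑y : AddCircle (1 : ℝ))}) ↔
    ¬ ∃ α ∈ Set.Ioo (0 : ℝ) 1, ∀ x : ℝ, F (x + α) - F x = α := by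
  constructor
  · -- contractible ⇒ no subperiod
    intro h
    rintro ⟨α, ⟨hα0, hα1⟩, hsub⟩
    have hsub' : ∀ t : ℝ, F (t + α) = F t + α := fun t => by have := hsub t; linarith
    have hne : ((0 : ℝ) : AddCircle (1 : ℝ)) ≠ ((α : ℝ) : AddCircle (1 : ℝ)) := by
      intro hEq
      have h0 : ‖(((0 : ℝ) - α : ℝ) : AddCircle (1 : ℝ))‖ = 0 := by
        rw [AddCircle.coe_sub, hEq]; simp
      have hfl : ⌊(0 : ℝ) - α⌋ = -1 := by
        rw [Int.floor_eq_iff]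
        constructor <;> push_cast <;> linarith
      have hfr : Int.fract ((0 : ℝ) - α) = 1 - α := by
        rw [← Int.self_sub_floor, hfl]; push_cast; ring
      rw [normAC_min, hfr] at h0
      rcases min_cases (1 - α) (1 - (1 - α)) with ⟨he, _⟩ | ⟨he, _⟩ <;> rw [he] at h0 <;>
        linarith
    obtain ⟨n, hn⟩ := h 0 α hne
    have hempty : {a : Fin n → ℝ |
        dist (↑(compIter F n (extSeq a) 0) : AddCircle (1 : ℝ))
          (↑(compIter F n (extSeq a) α))
        < dist ((0 : ℝ) : AddCircle (1 : ℝ)) ((α : ℝ) : AddCircle (1 : ℝ))} = ∅ := by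
      rw [Set.eq_empty_iff_forall_notMem]
      intro a ha
      simp only [Set.mem_setOf_eq] at ha
      have h0 : compIter F n (extSeq a) α = compIter F n (extSeq a) 0 + α := by
        have := compIter_shift F hsub' n (extSeq a) 0
        rwa [zero_add] at this
      rw [h0, distAC, distAC,
        show compIter F n (extSeq a) 0 - (compIter F n (extSeq a) 0 + α) = (0 : ℝ) - α
          by ring] at ha
      exact lt_irrefl _ ha
    rw [hempty] at hn
    simp at hn
  · -- no subperiod ⇒ contractible
    intro hns x y hxy
    set D : ℝ := ‖((y - x : ℝ) : AddCircle (1 : ℝ))‖ with hD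
    have hd : 0 < D := by
      have hpos : 0 < dist ((y : ℝ) : AddCircle (1 : ℝ)) ((x : ℝ) : AddCircle (1 : ℝ)) :=
        dist_pos.mpr (Ne.symm hxy)
      rwa [distAC] at hpos
    have hex : ∃ α₀ : ℝ,
        ‖((F (y + α₀) - F (x + α₀) : ℝ) : AddCircle (1 : ℝ))‖ < D := by
      by_contra hcon
      push_neg at hcon
      exact hns (key F hF.continuous hdeg x y hd hcon)
    obtain ⟨α₀, hα₀⟩ := hex
    set Φ : ℝ → ℝ := fun α => ‖((F (y + α) - F (x + α) : ℝ) : AddCircle (1 : ℝ))‖ with hΦ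
    have hΦc : Continuous Φ := by
      apply continuous_norm.comp
      exact continuous_quotient_mk'.comp
        ((hF.continuous.comp (continuous_const.add continuous_id)).sub
          (hF.continuous.comp (continuous_const.add continuous_id)))
    have hper : ∀ α : ℝ, Φ (Int.fract α) = Φ α := by
      intro α
      have e1 : F (y + Int.fract α) = F (y + α) + ((-⌊α⌋ : ℤ) : ℝ) := by
        rw [show y + Int.fract α = (y + α) + ((-⌊α⌋ : ℤ) : ℝ) by
          rw [← Int.self_sub_floor]; push_cast; ring]
        exact lift_int F hdeg (-⌊α⌋) (y + α)
      have e2 : F (x + Int.fract α) = F (x + α) + ((-⌊α⌋ : ℤ) : ℝ) := by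
        rw [show x + Int.fract α = (x + α) + ((-⌊α⌋ : ℤ) : ℝ) by
          rw [← Int.self_sub_floor]; push_cast; ring]
        exact lift_int F hdeg (-⌊α⌋) (x + α)
      simp only [hΦ, e1, e2]
      ring_nf
    set β : ℝ := Int.fract α₀ with hβ
    have hβ0 : 0 ≤ β := Int.fract_nonneg _
    have hβ1 : β < 1 := Int.fract_lt_one _
    have hβU : Φ β < D := by rw [hβ, hper]; exact hα₀
    have hUopen : IsOpen (Φ ⁻¹' Set.Iio D) := isOpen_Iio.preimage hΦc
    obtain ⟨ε, hε, hball⟩ := Metric.isOpen_iff.mp hUopen β hβU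
    set b : ℝ := min (β + ε) 1 with hb
    have hβb : β < b := lt_min (by linarith) hβ1
    refine ⟨1, ?_⟩
    have hsubset : (Set.univ.pi fun _ : Fin 1 => Set.Ioo β b) ⊆
        {a : Fin 1 → ℝ |
          dist (↑(compIter F 1 (extSeq a) x) : AddCircle (1 : ℝ))
            (↑(compIter F 1 (extSeq a) y))
          < dist ((x : ℝ) : AddCircle (1 : ℝ)) ((y : ℝ) : AddCircle (1 : ℝ))} := by
      intro a ha
      have ha0 : a 0 ∈ Set.Ioo β b := ha 0 (Set.mem_univ _)
      simp only [Set.mem_setOf_eq]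
      have hcomp : ∀ u : ℝ, compIter F 1 (extSeq a) u = F (u + a 0) - a 0 := by
        intro u; simp [compIter, extSeq]
      rw [hcomp x, hcomp y]
      have e1 : dist (↑(F (x + a 0) - a 0) : AddCircle (1 : ℝ))
          (↑(F (y + a 0) - a 0) : AddCircle (1 : ℝ)) = Φ (a 0) := by
        rw [distAC,
          show (F (x + a 0) - a 0) - (F (y + a 0) - a 0) = -(F (y + a 0) - F (x + a 0))
            by ring, normAC_neg]
      have e2 : dist ((x : ℝ) : AddCircle (1 : ℝ)) ((y : ℝ) : AddCircle (1 : ℝ)) = D := by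
        rw [distAC, show x - y = -(y - x) by ring, normAC_neg]
      rw [e1, e2]
      have hmem : a 0 ∈ Metric.ball β ε := by
        rw [Metric.mem_ball, Real.dist_eq]
        have h1 : a 0 < β + ε := lt_of_lt_of_le ha0.2 (min_le_left _ _)
        have h2 : β < a 0 := ha0.1
        rw [abs_lt]; constructor <;> linarith
      exact hball hmem
    have hpos : 0 < unifIid 1 (Set.univ.pi fun _ : Fin 1 => Set.Ioo β b) := by
      rw [unifIid, Measure.pi_pi]
      rw [Finset.prod_const, Finset.card_univ, Fintype.card_fin, pow_one]
      rw [Measure.restrict_apply measurableSet_Ioo]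
      have hss : Set.Ioo β b ∩ Set.Ico (0 : ℝ) 1 = Set.Ioo β b := by
        apply Set.inter_eq_self_of_subset_left
        intro t ht
        exact ⟨le_trans hβ0 ht.1.le, lt_of_lt_of_le ht.2 (min_le_right _ _)⟩
      rw [hss, Real.volume_Ioo]
      exact ENNReal.ofReal_pos.mpr (by linarith)
    exact lt_of_lt_of_le hpos (measure_mono hsubset)
end

section
/- For a càdlàg cocycle on a compact metric space, for every fixed t and ω, the family of maps {φ(s,ω) : 0 ≤ s ≤ t} is equicontinuous. -/
open Filter Topology NNReal

/-!
If equicontinuity failed at `x₀`, there would be times `sₙ ≤ t` and points `yₙ → x₀` with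
`dist (φ sₙ x₀) (φ sₙ yₙ) ≥ ε`. By compactness of `[0, t]` and the monotone subsequence
theorem, `sₙ` may be taken convergent and either antitone or strictly increasing. Right
continuity, respectively the existence of left limits, then sends both `φ sₙ x₀` and
`φ sₙ yₙ` to the same point: the left limit `φm s x₀` does not depend on the sequences.
-/

theorem exists_strictMono_subseq_strictMono_or_antitone {α : Type*} [LinearOrder α]
    (f : ℕ → α) : ∃ g : ℕ → ℕ, StrictMono g ∧ (StrictMono (f ∘ g) ∨ Antitone (f ∘ g)) := by
  obtain ⟨g, hg⟩ := exists_increasing_or_nonincreasing_subseq (· < ·) f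
  refine ⟨g, g.strictMono, hg.imp (fun h _ _ => h _ _) fun h m n hmn => ?_⟩
  rcases hmn.lt_or_eq with hlt | rfl
  · exact not_lt.mp (h m n hlt)
  · exact le_rfl

theorem Metric.equicontinuousAt_of_exists_subseq_tendsto {ι X Y : Type*}
    [PseudoMetricSpace X] [PseudoMetricSpace Y] {F : ι → X → Y} {x₀ : X}
    (h : ∀ (i : ℕ → ι) (y : ℕ → X), Tendsto y atTop (𝓝 x₀) →
      ∃ (g : ℕ → ℕ) (L : Y), Tendsto (fun n => F (i (g n)) x₀) atTop (𝓝 L) ∧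
        Tendsto (fun n => F (i (g n)) (y (g n))) atTop (𝓝 L)) :
    EquicontinuousAt F x₀ := by
  rw [Metric.equicontinuousAt_iff]
  by_contra! hne
  obtain ⟨ε, hε, hbad⟩ := hne
  have hsel : ∀ n : ℕ, ∃ (y : X) (i : ι),
      dist y x₀ < 1 / (n + 1) ∧ ε ≤ dist (F i x₀) (F i y) := fun n => by
    obtain ⟨y, hy, i, hi⟩ := hbad (1 / (n + 1)) Nat.one_div_pos_of_nat
    exact ⟨y, i, hy, hi⟩
  choose y i hy hi using hsel
  have hy_tendsto : Tendsto y atTop (𝓝 x₀) :=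
    tendsto_iff_dist_tendsto_zero.mpr <| squeeze_zero (fun _ => dist_nonneg)
      (fun n => (hy n).le) tendsto_one_div_add_atTop_nhds_zero_nat
  obtain ⟨g, L, hx₀L, hyL⟩ := h i y hy_tendsto
  have hdist : Tendsto (fun n => dist (F (i (g n)) x₀) (F (i (g n)) (y (g n)))) atTop
      (𝓝 0) := by
    simpa only [dist_self] using hx₀L.dist hyL
  exact hε.not_ge (ge_of_tendsto hdist (Eventually.of_forall fun n => hi (g n)))

theorem stmt17_general {X : Type*} [MetricSpace X] [CompactSpace X]
    (φ : ℝ≥0 → X → X)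
    (hright : ∀ (u : ℕ → ℝ≥0) (t : ℝ≥0) (x : ℕ → X) (p : X),
      Antitone u → Tendsto u atTop (𝓝 t) → Tendsto x atTop (𝓝 p) →
        Tendsto (fun n => φ (u n) (x n)) atTop (𝓝 (φ t p)))
    (φm : ℝ≥0 → X → X)
    (hleft : ∀ (u : ℕ → ℝ≥0) (t : ℝ≥0) (x : ℕ → X) (p : X),
      StrictMono u → Tendsto u atTop (𝓝 t) → Tendsto x atTop (𝓝 p) →
        Tendsto (fun n => φ (u n) (x n)) atTop (𝓝 (φm t p)))
    (t : ℝ≥0) :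
    Equicontinuous (fun s : {s : ℝ≥0 // s ≤ t} => φ s) := by
  refine fun x₀ => Metric.equicontinuousAt_of_exists_subseq_tendsto fun i y hy => ?_
  obtain ⟨s, -, g₁, hg₁, hs⟩ :=
    (isCompact_Icc (a := 0) (b := t)).tendsto_subseq fun n => ⟨zero_le, (i n).2⟩
  obtain ⟨g₂, hg₂, hmono | hanti⟩ :=
    exists_strictMono_subseq_strictMono_or_antitone fun n => (i (g₁ n) : ℝ≥0)
  all_goals
    have hs' := hs.comp hg₂.tendsto_atTop
    have hy' := hy.comp (hg₁.comp hg₂).tendsto_atTop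
  · exact ⟨g₁ ∘ g₂, φm s x₀, hleft _ s _ x₀ hmono hs' tendsto_const_nhds,
      hleft _ s _ x₀ hmono hs' hy'⟩
  · exact ⟨g₁ ∘ g₂, φ s x₀, hright _ s _ x₀ hanti hs' tendsto_const_nhds,
      hright _ s _ x₀ hanti hs' hy'⟩

/-- Lemma A1: for a càdlàg cocycle (here, for one fixed noise realisation, a family
`φ s : X → X`, `s ∈ [0,∞)`, of continuous maps on a compact metric space which is
right-continuous with left limits jointly in time and space), for every `t` the family
`{φ s : 0 ≤ s ≤ t}` is equicontinuous. -/
theorem stmt17 {X : Type*} [MetricSpace X] [CompactSpace X]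
    (φ : ℝ≥0 → X → X) (hcont : ∀ s, Continuous (φ s))
    (hright : ∀ (u : ℕ → ℝ≥0) (t : ℝ≥0) (x : ℕ → X) (p : X),
      Antitone u → Tendsto u atTop (𝓝 t) → Tendsto x atTop (𝓝 p) →
        Tendsto (fun n => φ (u n) (x n)) atTop (𝓝 (φ t p)))
    (φm : ℝ≥0 → X → X)
    (hleft : ∀ (u : ℕ → ℝ≥0) (t : ℝ≥0) (x : ℕ → X) (p : X),
      StrictMono u → Tendsto u atTop (𝓝 t) → Tendsto x atTop (𝓝 p) →
        Tendsto (fun n => φ (u n) (x n)) atTop (𝓝 (φm t p)))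
    (t : ℝ≥0) :
    Equicontinuous (fun s : {s : ℝ≥0 // s ≤ t} => φ s) :=
  stmt17_general φ hright φm hleft t
end

section
/- If a pair (ω,x) is recurrently Lyapunov stable and locally attractive in the naïve sense, then it is asymptotically stable; conversely, if (ω,x) is asymptotically stable then it is Lyapunov stable and locally attractive in the naïve sense. -/
/-!
Write `d_t(y) = dist (φ t ω x) (φ t ω y)`. Asymptotic stability says exactly that `d_t → 0`
uniformly on a neighbourhood of `x`. Conversely, if `d_t(y) → 0` pointwise, pick `s` so large
that `d_s(y) < δ/2` and `Θ^s(ω,x)` is `(ε,δ)`-contained; by continuity of `φ(s,ω)` every `z`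
near `y` has `d_s(z) ≤ δ`, and the cocycle property then gives `d_u(z) ≤ ε` for all `u ≥ s`.
So the convergence is locally uniform, hence uniform on a compact neighbourhood of `x`.
Lyapunov stability follows from uniform convergence after some time `T`, together with
continuity of the finitely many maps `φ(t,ω)`, `t < T`.
-/

open Filter Topology

section

variable {Ω X : Type*} [MetricSpace X]

/-- `(ω,x)` is `(ε,δ)`-contained. -/
def contained (φ : ℕ → Ω → X → X) (ε δ : ℝ) (ω : Ω) (x : X) : Prop :=
  ∀ y : X, dist x y ≤ δ → ∀ t : ℕ, dist (φ t ω x) (φ t ω y) ≤ ε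

/-- `(ω,x)` is Lyapunov stable. -/
def lyapStable (φ : ℕ → Ω → X → X) (ω : Ω) (x : X) : Prop :=
  ∀ ε > (0 : ℝ), ∃ δ, 0 < δ ∧ δ ≤ ε ∧ contained φ ε δ ω x

/-- `(ω,x)` is recurrently Lyapunov stable: for each `ε` there is `δ` such that the set of
times `t` at which the shifted pair `Θ^t(ω,x) = (θ^t ω, φ(t,ω)x)` is `(ε,δ)`-contained is
unbounded. -/
def recLyapStable (φ : ℕ → Ω → X → X) (θ : ℕ → Ω → Ω) (ω : Ω) (x : X) : Prop :=
  ∀ ε > (0 : ℝ), ∃ δ, 0 < δ ∧ δ ≤ ε ∧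
    ∀ N : ℕ, ∃ t ≥ N, contained φ ε δ (θ t ω) (φ t ω x)

/-- `(ω,x)` is locally attractive in the naïve sense. -/
def naiveAttractive (φ : ℕ → Ω → X → X) (ω : Ω) (x : X) : Prop :=
  ∃ U ∈ 𝓝 x, ∀ y ∈ U, Tendsto (fun t => dist (φ t ω x) (φ t ω y)) atTop (𝓝 0)

/-- `(ω,x)` is asymptotically stable. -/
def asympStable (φ : ℕ → Ω → X → X) (ω : Ω) (x : X) : Prop :=
  ∃ U ∈ 𝓝 x, Tendsto (fun t => EMetric.diam (φ t ω '' U)) atTop (𝓝 0)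

end

theorem tendstoUniformlyOn_dist_zero_iff {ι β α : Type*} [PseudoMetricSpace α]
    {f g : ι → β → α} {p : Filter ι} {s : Set β} :
    TendstoUniformlyOn (fun n y => dist (f n y) (g n y)) 0 p s ↔
      ∀ ε > 0, ∀ᶠ n in p, ∀ y ∈ s, dist (f n y) (g n y) < ε := by
  simp only [Metric.tendstoUniformlyOn_iff, Pi.zero_apply, dist_zero_left, Real.norm_eq_abs,
    abs_dist]

section

variable {Ω X : Type*} [MetricSpace X] {θ : ℕ → Ω → Ω} {φ : ℕ → Ω → X → X} {ω : Ω} {x : X}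

theorem asympStable_iff_exists_tendstoUniformlyOn :
    asympStable φ ω x ↔
      ∃ U ∈ 𝓝 x, TendstoUniformlyOn (fun t y => dist (φ t ω x) (φ t ω y)) 0 atTop U := by
  refine exists_congr fun U => and_congr_right fun hU => ?_
  have hx : x ∈ U := mem_of_mem_nhds hU
  rw [tendstoUniformlyOn_dist_zero_iff]
  constructor
  · intro hdiam ε hε
    filter_upwards [hdiam.eventually (gt_mem_nhds (ENNReal.ofReal_pos.2 hε))] with t ht y hy
    exact edist_lt_ofReal.1 <|
      (Metric.edist_le_ediam_of_mem (Set.mem_image_of_mem _ hx) (Set.mem_image_of_mem _ hy)).trans_lt ht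
  · intro h
    refine ENNReal.tendsto_nhds_zero.2 fun ε hε => ?_
    obtain ⟨r, -, hr, hrε⟩ := ENNReal.lt_iff_exists_real_btwn.1 hε
    have hr : 0 < r := ENNReal.ofReal_pos.1 hr
    filter_upwards [h (r / 2) (half_pos hr)] with t ht
    refine (Metric.ediam_le ?_).trans hrε.le
    rintro _ ⟨y, hy, rfl⟩ _ ⟨z, hz, rfl⟩
    rw [edist_le_ofReal hr.le]
    calc dist (φ t ω y) (φ t ω z) ≤ dist (φ t ω x) (φ t ω y) + dist (φ t ω x) (φ t ω z) :=
          dist_triangle_left _ _ _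
      _ ≤ r := by linarith [ht y hy, ht z hz]

theorem dist_le_of_contained_shift (hcocycle : ∀ s t, φ (s + t) ω = φ t (θ s ω) ∘ φ s ω)
    {ε δ : ℝ} {s u : ℕ} {z : X} (hs : contained φ ε δ (θ s ω) (φ s ω x))
    (hz : dist (φ s ω x) (φ s ω z) ≤ δ) (hsu : s ≤ u) :
    dist (φ u ω x) (φ u ω z) ≤ ε := by
  rw [← Nat.add_sub_cancel' hsu, hcocycle]
  exact hs _ hz _

theorem tendstoLocallyUniformlyOn_dist_of_recLyapStable (hcont : ∀ t, Continuous (φ t ω))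
    (hcocycle : ∀ s t, φ (s + t) ω = φ t (θ s ω) ∘ φ s ω) (hrec : recLyapStable φ θ ω x)
    {U : Set X} (hU : ∀ y ∈ U, Tendsto (fun t => dist (φ t ω x) (φ t ω y)) atTop (𝓝 0)) :
    TendstoLocallyUniformlyOn (fun t y => dist (φ t ω x) (φ t ω y)) 0 atTop U := by
  refine Metric.tendstoLocallyUniformlyOn_iff.2 fun ε hε y hy => ?_
  obtain ⟨δ, hδ, -, hcon⟩ := hrec (ε / 2) (half_pos hε)
  obtain ⟨T, hT⟩ := eventually_atTop.1 ((hU y hy).eventually (gt_mem_nhds (half_pos hδ)))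
  obtain ⟨s, hsT, hs⟩ := hcon T
  refine ⟨_, mem_nhdsWithin_of_mem_nhds
    ((hcont s).continuousAt (Metric.ball_mem_nhds (φ s ω y) (half_pos hδ))), ?_⟩
  filter_upwards [eventually_ge_atTop s] with u hu z hz
  have hsz : dist (φ s ω x) (φ s ω z) ≤ δ := by
    have hyz : dist (φ s ω y) (φ s ω z) < δ / 2 := Metric.mem_ball'.1 hz
    linarith [dist_triangle (φ s ω x) (φ s ω y) (φ s ω z), hT s hsT]
  rw [Pi.zero_apply, dist_zero_left, Real.norm_eq_abs, abs_dist]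
  exact (dist_le_of_contained_shift hcocycle hs hsz hu).trans_lt (half_lt_self hε)

theorem asympStable_of_recLyapStable_of_naiveAttractive [LocallyCompactSpace X]
    (hcont : ∀ t, Continuous (φ t ω)) (hcocycle : ∀ s t, φ (s + t) ω = φ t (θ s ω) ∘ φ s ω)
    (hrec : recLyapStable φ θ ω x) (hattr : naiveAttractive φ ω x) :
    asympStable φ ω x := by
  obtain ⟨U, hU, hconv⟩ := hattr
  obtain ⟨K, hK, hKU, hKc⟩ := local_compact_nhds hU
  refine asympStable_iff_exists_tendstoUniformlyOn.2 ⟨K, hK, ?_⟩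
  exact (tendstoLocallyUniformlyOn_iff_tendstoUniformlyOn_of_compact hKc).1
    ((tendstoLocallyUniformlyOn_dist_of_recLyapStable hcont hcocycle hrec hconv).mono hKU)

theorem naiveAttractive_of_asympStable (h : asympStable φ ω x) : naiveAttractive φ ω x := by
  obtain ⟨U, hU, hconv⟩ := asympStable_iff_exists_tendstoUniformlyOn.1 h
  exact ⟨U, hU, fun y hy => hconv.tendsto_at hy⟩

theorem equicontinuousAt_of_tendstoUniformlyOn_dist (hcont : ∀ t, Continuous (φ t ω))
    {U : Set X} (hU : U ∈ 𝓝 x)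
    (hconv : TendstoUniformlyOn (fun t y => dist (φ t ω x) (φ t ω y)) 0 atTop U) :
    EquicontinuousAt (fun t => φ t ω) x := by
  refine Metric.equicontinuousAt_iff_right.2 fun ε hε => ?_
  obtain ⟨T, hT⟩ := eventually_atTop.1 (tendstoUniformlyOn_dist_zero_iff.1 hconv ε hε)
  have hfin : ∀ᶠ y in 𝓝 x, ∀ t ∈ Finset.range T, dist (φ t ω x) (φ t ω y) < ε :=
    (eventually_all_finset _).2 fun t _ =>
      ((hcont t).continuousAt.eventually_mem (Metric.ball_mem_nhds _ hε)).mono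
        fun y hy => Metric.mem_ball'.1 hy
  filter_upwards [hU, hfin] with y hyU hy t
  rcases lt_or_ge t T with ht | ht
  · exact hy t (Finset.mem_range.2 ht)
  · exact hT t ht y hyU

theorem lyapStable_of_equicontinuousAt (h : EquicontinuousAt (fun t => φ t ω) x) :
    lyapStable φ ω x := by
  intro ε hε
  obtain ⟨δ, hδ, hball⟩ :=
    Metric.nhds_basis_closedBall.eventually_iff.1 (Metric.equicontinuousAt_iff_right.1 h ε hε)
  refine ⟨min δ ε, lt_min hδ hε, min_le_right _ _, fun y hy t => (hball ?_ t).le⟩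
  rw [Metric.mem_closedBall, dist_comm]
  exact hy.trans (min_le_left _ _)

theorem lyapStable_of_asympStable (hcont : ∀ t, Continuous (φ t ω)) (h : asympStable φ ω x) :
    lyapStable φ ω x := by
  obtain ⟨U, hU, hconv⟩ := asympStable_iff_exists_tendstoUniformlyOn.1 h
  exact lyapStable_of_equicontinuousAt (equicontinuousAt_of_tendstoUniformlyOn_dist hcont hU hconv)

end

theorem stmt18_general {Ω X : Type*} [MetricSpace X] [CompactSpace X]
    (θ : ℕ → Ω → Ω) (φ : ℕ → Ω → X → X)
    (hcont : ∀ t ω, Continuous (φ t ω))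
    (hcocycle : ∀ s t ω, φ (s + t) ω = φ t (θ s ω) ∘ φ s ω)
    (ω : Ω) (x : X) :
    (recLyapStable φ θ ω x → naiveAttractive φ ω x → asympStable φ ω x) ∧
    (asympStable φ ω x → lyapStable φ ω x ∧ naiveAttractive φ ω x) :=
  ⟨asympStable_of_recLyapStable_of_naiveAttractive (hcont · ω) (hcocycle · · ω),
    fun h => ⟨lyapStable_of_asympStable (hcont · ω) h, naiveAttractive_of_asympStable h⟩⟩

/-- Theorem A11: (I) a recurrently Lyapunov stable pair which is locally attractive in the
naïve sense is asymptotically stable; (II) an asymptotically stable pair is Lyapunov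
stable and locally attractive in the naïve sense. -/
theorem stmt18 {Ω X : Type*} [MetricSpace X] [CompactSpace X]
    (θ : ℕ → Ω → Ω) (φ : ℕ → Ω → X → X)
    (hcont : ∀ t ω, Continuous (φ t ω))
    (hφ0 : ∀ ω, φ 0 ω = id)
    (hcocycle : ∀ s t ω, φ (s + t) ω = φ t (θ s ω) ∘ φ s ω)
    (ω : Ω) (x : X) :
    (recLyapStable φ θ ω x → naiveAttractive φ ω x → asympStable φ ω x) ∧
    (asympStable φ ω x → lyapStable φ ω x ∧ naiveAttractive φ ω x) :=
  stmt18_general θ φ hcont hcocycle ω x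
end

section
/- For any stationary probability measure ρ of a memoryless RDS, the set of pairs (ω,x) that are Lyapunov stable but not recurrently Lyapunov stable is a (P ⊗ ρ)-null set. -/
open MeasureTheory ProbabilityTheory Filter Topology

/-- A (discrete-time) filtered random dynamical system over a memoryless stationary
noise space, on a metric space `X`. -/
structure MRDS (Ω X : Type*) [mΩ : MeasurableSpace Ω] [MetricSpace X]
    [mX : MeasurableSpace X] [BorelSpace X] where
  P : Measure Ω
  hprob : IsProbabilityMeasure P
  F : ℕ → MeasurableSpace Ω
  hle : ∀ t, F t ≤ mΩ
  hmono : Monotone F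
  θ : ℕ → Ω → Ω
  hθ0 : θ 0 = id
  hθadd : ∀ s t, θ (s + t) = θ s ∘ θ t
  hθmeas : ∀ s t, @Measurable Ω Ω (F (s + t)) (F s) (θ t)
  hθpres : ∀ t, MeasurePreserving (θ t) P P
  memless : ∀ s, Indep (F s) ((⨆ t, F t).comap (θ s)) P
  φ : ℕ → Ω → X → X
  hφcont : ∀ t ω, Continuous (φ t ω)
  hφmeas : ∀ t, @Measurable (Ω × X) X ((F t).prod mX) mX (fun p => φ t p.1 p.2)
  hφ0 : ∀ ω, φ 0 ω = id
  hφcocycle : ∀ s t ω, φ (s + t) ω = φ t (θ s ω) ∘ φ s ω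

namespace MRDS

variable {Ω X : Type*} [MeasurableSpace Ω] [MetricSpace X]
  [MeasurableSpace X] [BorelSpace X]

/-- The one-point transition probabilities `φ_x^t`. -/
noncomputable def law (R : MRDS Ω X) (x : X) (t : ℕ) : Measure X :=
  R.P.map (fun ω => R.φ t ω x)

/-- A closed set that is forward-invariant for the one-point transition probabilities. -/
def FwdInv (R : MRDS Ω X) (K : Set X) : Prop :=
  IsClosed K ∧ ∀ x ∈ K, ∀ t, R.law x t K = 1

/-- A minimal set: non-empty, closed, forward-invariant, with no proper non-empty closed
forward-invariant subsets. -/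
def Minimal (R : MRDS Ω X) (K : Set X) : Prop :=
  K.Nonempty ∧ R.FwdInv K ∧ ∀ K' ⊆ K, R.FwdInv K' → K' = K ∨ K' = ∅

/-- `A` contracts under the noise realisation `ω`. -/
def contracts (R : MRDS Ω X) (ω : Ω) (A : Set X) : Prop :=
  Tendsto (fun t => EMetric.diam (R.φ t ω '' A)) atTop (𝓝 0)

/-- `(ω, x)` is an asymptotically stable pair. -/
def stablePair (R : MRDS Ω X) (ω : Ω) (x : X) : Prop :=
  ∃ U ∈ 𝓝 x, R.contracts ω U

/-- The set of asymptotically stable pairs. -/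
def O (R : MRDS Ω X) : Set (Ω × X) := {p | R.stablePair p.1 p.2}

/-- The set of noise realisations under which `U` contracts. -/
def EU (R : MRDS Ω X) (U : Set X) : Set Ω := {ω | R.contracts ω U}

/-- `x` is potentially stable. -/
def potStable (R : MRDS Ω X) (x : X) : Prop := 0 < R.P {ω | R.stablePair ω x}

/-- `x` is almost surely stable. -/
def asStable (R : MRDS Ω X) (x : X) : Prop := R.P {ω | R.stablePair ω x} = 1

/-- `φ` is globally synchronising. -/
def synchronising (R : MRDS Ω X) : Prop :=
  ∀ x y : X,
    R.P {ω | Tendsto (fun t => dist (R.φ t ω x) (R.φ t ω y)) atTop (𝓝 0)} = 1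

/-- `φ` is stably synchronising. -/
def stablySynchronising (R : MRDS Ω X) : Prop :=
  R.synchronising ∧ ∀ x : X, R.asStable x

/-- `ρ` is a stationary measure for the one-point transition probabilities. -/
def stationary (R : MRDS Ω X) (ρ : Measure X) : Prop :=
  ∀ t, ∀ A : Set X, MeasurableSet A → ∫⁻ x, R.law x t A ∂ρ = ρ A

end MRDS

/-- `(ω,x)` is `(ε,δ)`-contained. -/
def MRDS.contained {Ω X : Type*} [MeasurableSpace Ω] [MetricSpace X]
    [MeasurableSpace X] [BorelSpace X] (R : MRDS Ω X) (ε δ : ℝ) (ω : Ω) (x : X) : Prop :=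
  ∀ y : X, dist x y ≤ δ → ∀ t : ℕ, dist (R.φ t ω x) (R.φ t ω y) ≤ ε

/-- `(ω,x)` is Lyapunov stable. -/
def MRDS.lyapStable {Ω X : Type*} [MeasurableSpace Ω] [MetricSpace X]
    [MeasurableSpace X] [BorelSpace X] (R : MRDS Ω X) (ω : Ω) (x : X) : Prop :=
  ∀ ε > (0 : ℝ), ∃ δ, 0 < δ ∧ δ ≤ ε ∧ R.contained ε δ ω x

/-- `(ω,x)` is recurrently Lyapunov stable: for each `ε` there is `δ` such that the set of
times `t` at which `Θ^t(ω,x) = (θ^t ω, φ(t,ω)x)` is `(ε,δ)`-contained is unbounded. -/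
def MRDS.recLyapStable {Ω X : Type*} [MeasurableSpace Ω] [MetricSpace X]
    [MeasurableSpace X] [BorelSpace X] (R : MRDS Ω X) (ω : Ω) (x : X) : Prop :=
  ∀ ε > (0 : ℝ), ∃ δ, 0 < δ ∧ δ ≤ ε ∧
    ∀ N : ℕ, ∃ t ≥ N, R.contained ε δ (R.θ t ω) (R.φ t ω x)

/-!
On `Ω` with the σ-algebra `F_∞ = ⨆ t, F t`, the time-one skew product `Θ` preserves
`P|_{F_∞} ⊗ ρ`: memorylessness makes `θ¹`-preimages of `F_∞`-sets independent of `φ(1, ·)`,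
and stationarity of `ρ` takes care of the `X`-marginal. By Poincaré recurrence, almost every
point of each set `L_{ε,δ}` of `(ε, δ)`-contained pairs returns to it infinitely often, and a
Lyapunov stable pair lies in some `L_{ε,δ}` for every `ε`. Countably many `ε, δ` suffice, and
testing containment against a countable dense set makes `L_{ε,δ}` measurable; the null set
found on `F_∞ ⊗ B(X)` stays null for `P ⊗ ρ`.
-/

lemma MeasurableSpace.prod_mono_left {α β : Type*} {m m' : MeasurableSpace α}
    (mβ : MeasurableSpace β) (h : m ≤ m') : m.prod mβ ≤ m'.prod mβ :=
  sup_le_sup_right (MeasurableSpace.comap_mono h) _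

attribute [instance] MRDS.hprob

namespace MRDS

variable {Ω X : Type*} [mΩ : MeasurableSpace Ω] [MetricSpace X]
  [mX : MeasurableSpace X] [BorelSpace X] (R : MRDS Ω X)

abbrev Finf : MeasurableSpace Ω := ⨆ t, R.F t

lemma Finf_le : R.Finf ≤ mΩ := iSup_le R.hle

/-- `Ω` with `F_∞` as its σ-algebra: memorylessness only controls `θ`-preimages of
`F_∞`-sets. -/
def Noise (_R : MRDS Ω X) : Type _ := Ω

instance : MeasurableSpace R.Noise := R.Finf

noncomputable def Pinf : Measure R.Noise := R.P.trim R.Finf_le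

lemma Pinf_apply {A : Set Ω} (hA : MeasurableSet[R.Finf] A) : R.Pinf A = R.P A :=
  trim_measurableSet_eq R.Finf_le hA

instance : IsProbabilityMeasure R.Pinf :=
  ⟨(R.Pinf_apply MeasurableSet.univ).trans measure_univ⟩

def shift (t : ℕ) : R.Noise → R.Noise := R.θ t

lemma measurable_shift (t : ℕ) : Measurable (R.shift t) := by
  rw [measurable_iff_le_map]
  exact iSup_le fun s => ((R.hθmeas s t).mono (le_iSup R.F (s + t)) le_rfl).le_map

lemma measurable_phi_noise (t : ℕ) : Measurable (fun p : R.Noise × X => R.φ t p.1 p.2) :=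
  (R.hφmeas t).mono (MeasurableSpace.prod_mono_left mX (le_iSup R.F t)) le_rfl

lemma measurable_phi (t : ℕ) : Measurable (fun p : Ω × X => R.φ t p.1 p.2) :=
  (R.hφmeas t).mono (MeasurableSpace.prod_mono_left mX (R.hle t)) le_rfl

def skew (p : R.Noise × X) : R.Noise × X := (R.shift 1 p.1, R.φ 1 p.1 p.2)

lemma measurable_skew : Measurable R.skew :=
  ((R.measurable_shift 1).comp measurable_fst).prodMk (R.measurable_phi_noise 1)

lemma skew_iterate (n : ℕ) (p : R.Noise × X) :
    R.skew^[n] p = (R.shift n p.1, R.φ n p.1 p.2) := by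
  induction n with
  | zero => exact Prod.ext (congrFun R.hθ0 p.1).symm (congrFun (R.hφ0 p.1) p.2).symm
  | succ n ih =>
    rw [Function.iterate_succ_apply', ih]
    refine Prod.ext ?_ (congrFun (R.hφcocycle n 1 p.1) p.2).symm
    rw [add_comm]
    exact (congrFun (R.hθadd 1 n) p.1).symm

lemma lintegral_measure_preimage_phi {ρ : Measure X} [SFinite ρ] (hstat : R.stationary ρ)
    (t : ℕ) {B : Set X} (hB : MeasurableSet B) :
    ∫⁻ ω, ρ (R.φ t ω ⁻¹' B) ∂ R.P = ρ B := by
  have hΦB := R.measurable_phi t hB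
  refine (Measure.prod_apply hΦB).symm.trans ?_
  rw [Measure.prod_apply_symm hΦB, ← hstat t B hB]
  refine lintegral_congr fun x => ?_
  exact (Measure.map_apply ((R.measurable_phi t).comp measurable_prodMk_right) hB).symm

/-- Memorylessness at work: `θ¹⁻¹ A` is independent of `F 1`, for which `φ(1, ·)` is
measurable. -/
lemma lintegral_indicator_shift_mul {ρ : Measure X} [SFinite ρ] (hstat : R.stationary ρ)
    {A : Set Ω} (hA : MeasurableSet[R.Finf] A) {B : Set X} (hB : MeasurableSet B) :
    ∫⁻ ω, (R.θ 1 ⁻¹' A).indicator 1 ω * ρ (R.φ 1 ω ⁻¹' B) ∂ R.P = R.P A * ρ B := by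
  have hf : Measurable[R.Finf.comap (R.θ 1)] ((R.θ 1 ⁻¹' A).indicator (1 : Ω → ENNReal)) :=
    measurable_const.indicator ⟨A, hA, rfl⟩
  have hg : Measurable[R.F 1] (fun ω => ρ (R.φ 1 ω ⁻¹' B)) :=
    @measurable_measure_prodMk_left Ω X (R.F 1) mX ρ _ _ (R.hφmeas 1 hB)
  have hindep : Indep (R.Finf.comap (R.θ 1)) (R.F 1) R.P := (R.memless 1).symm
  rw [lintegral_mul_eq_lintegral_mul_lintegral_of_independent_measurableSpace
      ((MeasurableSpace.comap_mono R.Finf_le).trans (R.hθpres 1).measurable.comap_le)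
      (R.hle 1) hindep hf hg,
    lintegral_indicator_one ((R.hθpres 1).measurable (R.Finf_le _ hA)),
    (R.hθpres 1).measure_preimage (R.Finf_le _ hA).nullMeasurableSet,
    R.lintegral_measure_preimage_phi hstat 1 hB]

lemma measure_skew_preimage_prod {ρ : Measure X} [SFinite ρ] (hstat : R.stationary ρ)
    {A : Set R.Noise} (hA : MeasurableSet A) {B : Set X} (hB : MeasurableSet B) :
    (R.Pinf.prod ρ) (R.skew ⁻¹' A ×ˢ B) = R.Pinf A * ρ B := by
  set s : Set R.Noise := R.shift 1 ⁻¹' A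
  have hsection (ω : R.Noise) :
      ρ (Prod.mk ω ⁻¹' (R.skew ⁻¹' A ×ˢ B)) = s.indicator 1 ω * ρ (R.φ 1 ω ⁻¹' B) := by
    by_cases hω : ω ∈ s
    · rw [Set.indicator_of_mem hω, Pi.one_apply, one_mul]
      congr 1
      ext x
      exact and_iff_right hω
    · rw [Set.indicator_of_notMem hω, zero_mul, ← measure_empty (μ := ρ)]
      congr 1
      ext x
      exact iff_of_false (fun h => hω h.1) id
  calc (R.Pinf.prod ρ) (R.skew ⁻¹' A ×ˢ B)
      = ∫⁻ ω, s.indicator 1 ω * ρ (R.φ 1 ω ⁻¹' B) ∂ R.Pinf := by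
        rw [Measure.prod_apply (R.measurable_skew (hA.prod hB))]
        exact lintegral_congr hsection
    _ = ∫⁻ ω, s.indicator 1 ω * ρ (R.φ 1 ω ⁻¹' B) ∂ R.P :=
        lintegral_trim _ ((measurable_const.indicator (R.measurable_shift 1 hA)).mul
          (measurable_measure_prodMk_left (R.measurable_phi_noise 1 hB)))
    _ = R.P A * ρ B := R.lintegral_indicator_shift_mul hstat hA hB
    _ = R.Pinf A * ρ B := by rw [R.Pinf_apply hA]

lemma measurePreserving_skew (ρ : Measure X) [SigmaFinite ρ]
    (hstat : R.stationary ρ) : MeasurePreserving R.skew (R.Pinf.prod ρ) (R.Pinf.prod ρ) :=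
  ⟨R.measurable_skew, (Measure.prod_eq fun A B hA hB => by
    rw [Measure.map_apply R.measurable_skew (hA.prod hB),
      R.measure_skew_preimage_prod hstat hA hB]).symm⟩

lemma ae_of_ae_Pinf_prod {ρ : Measure X} [SigmaFinite ρ] {Q : R.Noise × X → Prop}
    (h : ∀ᵐ p ∂ R.Pinf.prod ρ, Q p) : ∀ᵐ p ∂ R.P.prod ρ, Q p := by
  have htrim : (R.P.prod ρ).trim (MeasurableSpace.prod_mono_left mX R.Finf_le) =
      R.Pinf.prod ρ :=
    (Measure.prod_eq (μ := R.Pinf) (ν := ρ) fun A B hA hB =>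
      (trim_measurableSet_eq _
        (show MeasurableSet[R.Finf.prod mX] (A ×ˢ B) from hA.prod hB)).trans
        ((Measure.prod_prod (μ := R.P) (ν := ρ) A B).trans (by rw [R.Pinf_apply hA]))).symm
  exact ae_of_ae_trim _ (htrim ▸ h)

/-- Tested only against a countable dense `S`, containment becomes a measurable condition on
`(ω, x)`; the strict inequality lets density recover `contained` for every smaller `δ`. -/
def containedOn (S : Set X) (ε δ : ℝ) (ω : Ω) (x : X) : Prop :=
  ∀ y ∈ S, dist x y < δ → ∀ t, dist (R.φ t ω x) (R.φ t ω y) ≤ ε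

lemma measurableSet_containedOn [SecondCountableTopology X] {S : Set X} (hS : S.Countable)
    (ε δ : ℝ) : MeasurableSet {p : R.Noise × X | R.containedOn S ε δ p.1 p.2} := by
  simp only [containedOn, Set.ofPred_forall]
  refine MeasurableSet.biInter hS fun y _ => .imp ?_ ?_
  · exact measurableSet_lt (measurable_snd.dist measurable_const) measurable_const
  · rw [Set.ofPred_forall]
    exact .iInter fun t => measurableSet_le ((R.measurable_phi_noise t).dist
      ((R.measurable_phi_noise t).comp (measurable_fst.prodMk measurable_const))) measurable_const

lemma containedOn_of_contained (S : Set X) {ε δ δ' : ℝ} (hδ : δ ≤ δ') {ω : Ω} {x : X}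
    (h : R.contained ε δ' ω x) : R.containedOn S ε δ ω x :=
  fun y _ hy => h y (hy.le.trans hδ)

lemma contained_of_containedOn {S : Set X} (hS : Dense S) {ε δ δ' : ℝ} (hδ : δ' < δ) {ω : Ω}
    {x : X} (h : R.containedOn S ε δ ω x) : R.contained ε δ' ω x := by
  intro y hy t
  have hy' : y ∈ closure (Metric.ball x δ ∩ S) :=
    hS.open_subset_closure_inter Metric.isOpen_ball
      (by rw [Metric.mem_ball, dist_comm]; exact hy.trans_lt hδ)
  have hclosed : IsClosed {z | dist (R.φ t ω x) (R.φ t ω z) ≤ ε} :=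
    isClosed_le (continuous_const.dist (R.hφcont t ω)) continuous_const
  refine hclosed.closure_subset_iff.2 (fun z hz => h z hz.2 ?_ t) hy'
  rw [← Metric.mem_ball']
  exact hz.1

lemma recLyapStable_of_frequently_containedOn {S : Set X} (hS : Dense S) {ω : Ω} {x : X}
    (hL : R.lyapStable ω x)
    (hrec : ∀ k j : ℕ, R.containedOn S (1 / (k + 1)) (1 / (j + 1)) ω x →
      ∃ᶠ t in atTop, R.containedOn S (1 / (k + 1)) (1 / (j + 1)) (R.θ t ω) (R.φ t ω x)) :
    R.recLyapStable ω x := by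
  intro ε hε
  obtain ⟨k, hk⟩ := exists_nat_one_div_lt hε
  obtain ⟨δ, hδ, hδk, hcont⟩ := hL (1 / (k + 1)) Nat.one_div_pos_of_nat
  obtain ⟨j, hj⟩ := exists_nat_one_div_lt hδ
  have hj0 : (0 : ℝ) < 1 / (j + 1) := Nat.one_div_pos_of_nat
  refine ⟨1 / (j + 1) / 2, by positivity, by linarith [half_lt_self hj0], fun N => ?_⟩
  obtain ⟨t, ht, hLt⟩ :=
    frequently_atTop.1 (hrec k j (R.containedOn_of_contained S hj.le hcont)) N
  exact ⟨t, ht, fun y hy s =>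
    (R.contained_of_containedOn hS (half_lt_self hj0) hLt y hy s).trans hk.le⟩

end MRDS

/-- Proposition A8: for any stationary probability measure `ρ` of a memoryless RDS, the
set of pairs that are Lyapunov stable but not recurrently Lyapunov stable is
`(P ⊗ ρ)`-null. -/
theorem stmt19 {Ω X : Type*} [MeasurableSpace Ω] [MetricSpace X] [CompactSpace X]
    [MeasurableSpace X] [BorelSpace X] (R : MRDS Ω X)
    (ρ : Measure X) (hρ : IsProbabilityMeasure ρ) (hstat : R.stationary ρ) :
    (R.P.prod ρ) {p : Ω × X | R.lyapStable p.1 p.2 ∧ ¬ R.recLyapStable p.1 p.2} = 0 := by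
  obtain ⟨S, hS, hSdense⟩ := TopologicalSpace.exists_countable_dense X
  let L (k j : ℕ) : Set (R.Noise × X) :=
    {p | R.containedOn S (1 / (k + 1)) (1 / (j + 1)) p.1 p.2}
  have hrec : ∀ᵐ p ∂ R.Pinf.prod ρ, ∀ k j, p ∈ L k j → ∃ᶠ n in atTop, R.skew^[n] p ∈ L k j := by
    simp only [ae_all_iff]
    exact fun k j => (R.measurePreserving_skew ρ hstat).conservative
      |>.ae_mem_imp_frequently_image_mem (R.measurableSet_containedOn hS _ _).nullMeasurableSet
  have hnull := ae_iff.1 (R.ae_of_ae_Pinf_prod hrec)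
  refine measure_mono_null ?_ hnull
  rintro p ⟨hstable, hnotrec⟩ hgood
  exact hnotrec <| R.recLyapStable_of_frequently_containedOn hSdense hstable
    fun k j h => (hgood k j h).mono fun n => (congrArg (· ∈ L k j) (R.skew_iterate n p)).mp
end
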